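/- arXiv:1702.06772 — 2 statements merged into one kernel-verified Lean document; each statement's English description precedes it below -/
import Mathlib

section
/- On the set of independent sets of the 4-cycle C₄, among all probability distributions whose four vertex marginals all equal s (0 < s < 1/2), the product-form distribution b(x) = λ^{∑x_i}/Z with λ = (−1+4s+√(1−4s+8s²))/(2−4s) uniquely maximizes entropy. -/
/-!
The constraints fix the expected number of occupied vertices, `4s`, and the normalisation, so
every feasible `b` has the same cross entropy `∑ b log b⋆ = 4s log λ - log Z` against the
product-form distribution `b⋆ S = λ^|S| / Z`, because `log b⋆` is affine in `|S|`. Gibbs'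
inequality `∑ b log b⋆ ≤ ∑ b log b`, strict unless `b = b⋆`, then gives `H b < H b⋆`. The value
of `λ` is the positive root of `λ + λ² = s (1 + 4λ + 2λ²)`, which makes `b⋆` feasible.
-/

open Finset Real

section Gibbs

variable {x c : ℝ}

theorem sub_le_mul_log_sub_mul_log (hx : 0 ≤ x) (hc : 0 ≤ c) (hxc : c = 0 → x = 0) :
    x - c ≤ x * log x - x * log c := by
  rcases hc.eq_or_lt with rfl | hc
  · simp [hxc rfl]
  rcases hx.eq_or_lt with rfl | hx
  · simpa using hc.le
  have h := log_le_sub_one_of_pos (div_pos hc hx)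
  rw [log_div hc.ne' hx.ne', le_sub_iff_add_le, le_div_iff₀ hx] at h
  linarith

theorem sub_lt_mul_log_sub_mul_log (hx : 0 ≤ x) (hc : 0 ≤ c) (hxc : c = 0 → x = 0)
    (hne : x ≠ c) : x - c < x * log x - x * log c := by
  rcases hc.eq_or_lt with rfl | hc
  · exact absurd (hxc rfl) hne
  rcases hx.eq_or_lt with rfl | hx
  · simpa using hc
  have h := log_lt_sub_one_of_pos (div_pos hc hx)
    (by rwa [ne_eq, div_eq_one_iff_eq hx.ne', eq_comm])
  rw [log_div hc.ne' hx.ne', lt_sub_iff_add_lt, lt_div_iff₀ hx] at h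
  linarith

variable {α : Type*} {t : Finset α} {b c : α → ℝ}

theorem sum_mul_log_lt_sum_mul_log (hb : ∀ a ∈ t, 0 ≤ b a) (hc : ∀ a ∈ t, 0 ≤ c a)
    (hbc : ∀ a ∈ t, c a = 0 → b a = 0) (hsum : ∑ a ∈ t, b a = ∑ a ∈ t, c a)
    (hne : ∃ a ∈ t, b a ≠ c a) :
    ∑ a ∈ t, b a * log (c a) < ∑ a ∈ t, b a * log (b a) := by
  obtain ⟨a, ha, hba⟩ := hne
  have key := sum_lt_sum (fun a ha => sub_le_mul_log_sub_mul_log (hb a ha) (hc a ha) (hbc a ha))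
    ⟨a, ha, sub_lt_mul_log_sub_mul_log (hb a ha) (hc a ha) (hbc a ha) hba⟩
  rw [sum_sub_distrib, sum_sub_distrib, hsum, sub_self] at key
  linarith

theorem neg_sum_mul_log_lt_of_sum_mul_log_eq (hb : ∀ a ∈ t, 0 ≤ b a) (hc : ∀ a ∈ t, 0 ≤ c a)
    (hbc : ∀ a ∈ t, c a = 0 → b a = 0) (hsum : ∑ a ∈ t, b a = ∑ a ∈ t, c a)
    (hcross : ∑ a ∈ t, b a * log (c a) = ∑ a ∈ t, c a * log (c a))
    (hne : ∃ a ∈ t, b a ≠ c a) :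
    -∑ a ∈ t, b a * log (b a) < -∑ a ∈ t, c a * log (c a) := by
  linarith [sum_mul_log_lt_sum_mul_log hb hc hbc hsum hne]

end Gibbs

section ProductForm

variable {ι : Type*} [DecidableEq ι]

theorem sum_mul_card_eq_sum_sum_filter_mem [Fintype ι] (F : Finset (Finset ι)) (b : Finset ι → ℝ) :
    ∑ S ∈ F, b S * #S = ∑ i, ∑ S ∈ F.filter (i ∈ ·), b S := by
  simp only [sum_filter]
  rw [sum_comm]
  refine sum_congr rfl fun S _ => ?_
  rw [← sum_filter, sum_const, filter_mem_eq_inter, univ_inter, nsmul_eq_mul, mul_comm]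

noncomputable def productForm (F : Finset (Finset ι)) (lam Z : ℝ) (S : Finset ι) : ℝ :=
  if S ∈ F then lam ^ #S / Z else 0

def IsDistribWithMarginals [Fintype ι] (F : Finset (Finset ι)) (s : ℝ) (b : Finset ι → ℝ) :
    Prop :=
  (∀ S, 0 ≤ b S) ∧ (∀ S ∉ F, b S = 0) ∧ ∑ S, b S = 1 ∧
    ∀ i, ∑ S ∈ F.filter (i ∈ ·), b S = s

variable {F : Finset (Finset ι)} {lam Z s : ℝ}

theorem productForm_of_mem {S : Finset ι} (hS : S ∈ F) : productForm F lam Z S = lam ^ #S / Z :=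
  if_pos hS

theorem productForm_nonneg (hlam : 0 ≤ lam) (hZ : 0 ≤ Z) (S : Finset ι) :
    0 ≤ productForm F lam Z S := by
  unfold productForm
  split_ifs <;> positivity

theorem notMem_of_productForm_eq_zero (hlam : 0 < lam) (hZ : 0 < Z) {S : Finset ι}
    (hS : productForm F lam Z S = 0) : S ∉ F := fun hSF =>
  (div_pos (pow_pos hlam _) hZ).ne' ((productForm_of_mem hSF).symm.trans hS)

variable [Fintype ι]

theorem productForm_isDistribWithMarginals (hlam : 0 ≤ lam) (hZ : 0 < Z)
    (hsum : ∑ S ∈ F, lam ^ #S = Z) (hmarg : ∀ i, ∑ S ∈ F.filter (i ∈ ·), lam ^ #S = s * Z) :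
    IsDistribWithMarginals F s (productForm F lam Z) := by
  refine ⟨productForm_nonneg hlam hZ.le, fun S hS => if_neg hS, ?_, fun i => ?_⟩
  · unfold productForm
    rw [sum_ite_mem, univ_inter, ← sum_div, hsum, div_self hZ.ne']
  · rw [sum_congr rfl fun S hS => productForm_of_mem (mem_filter.1 hS).1, ← sum_div, hmarg,
      mul_div_cancel_right₀ _ hZ.ne']

theorem sum_mul_log_productForm {b : Finset ι → ℝ} (hlam : 0 < lam) (hZ : 0 < Z)
    (hb : IsDistribWithMarginals F s b) :
    ∑ S, b S * log (productForm F lam Z S) = Fintype.card ι * s * log lam - log Z := by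
  obtain ⟨-, hbF, hsum, hmarg⟩ := hb
  have hsupp (f : Finset ι → ℝ) : ∑ S, b S * f S = ∑ S ∈ F, b S * f S :=
    (sum_subset (subset_univ F) fun S _ hS => by rw [hbF S hS, zero_mul]).symm
  have hsumF : ∑ S ∈ F, b S = 1 :=
    hsum ▸ (sum_subset (subset_univ F) fun S _ hS => hbF S hS)
  have hterm (S : Finset ι) (hS : S ∈ F) :
      b S * log (productForm F lam Z S) = b S * #S * log lam - b S * log Z := by
    rw [productForm_of_mem hS, log_div (by positivity) hZ.ne', log_pow]; ring
  rw [hsupp, sum_congr rfl hterm, sum_sub_distrib, ← sum_mul, ← sum_mul,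
    sum_mul_card_eq_sum_sum_filter_mem, hsumF]
  simp [hmarg]

theorem neg_sum_mul_log_lt_productForm {b : Finset ι → ℝ} (hlam : 0 < lam) (hZ : 0 < Z)
    (hc : IsDistribWithMarginals F s (productForm F lam Z)) (hb : IsDistribWithMarginals F s b)
    (hne : b ≠ productForm F lam Z) :
    -∑ S, b S * log (b S) < -∑ S, productForm F lam Z S * log (productForm F lam Z S) := by
  refine neg_sum_mul_log_lt_of_sum_mul_log_eq (fun S _ => hb.1 S) (fun S _ => hc.1 S)
    (fun S _ hS => hb.2.1 S (notMem_of_productForm_eq_zero hlam hZ hS))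
    (hb.2.2.1.trans hc.2.2.1.symm) ?_ (by simpa [funext_iff] using hne)
  rw [sum_mul_log_productForm hlam hZ hb, sum_mul_log_productForm hlam hZ hc]

end ProductForm

section CycleFour

def c4IndepSets : Finset (Finset (Fin 4)) :=
  univ.filter fun S => ∀ i ∈ S, ∀ j ∈ S, ¬ (j = i + 1 ∨ i = j + 1)

theorem c4IndepSets_eq : c4IndepSets = {∅, {0}, {1}, {2}, {3}, {0, 2}, {1, 3}} := by decide

theorem filter_mem_c4IndepSets (i : Fin 4) :
    c4IndepSets.filter (i ∈ ·) = {{i}, {i, i + 2}} := by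
  revert i; decide

theorem sum_c4IndepSets_pow_card (x : ℝ) :
    ∑ S ∈ c4IndepSets, x ^ #S = 1 + 4 * x + 2 * x ^ 2 := by
  rw [c4IndepSets_eq]
  repeat rw [sum_insert (by decide)]
  simp only [sum_singleton, card_empty, card_singleton,
    show #({0, 2} : Finset (Fin 4)) = 2 by decide, show #({1, 3} : Finset (Fin 4)) = 2 by decide]
  ring

theorem sum_filter_mem_c4IndepSets_pow_card (i : Fin 4) (x : ℝ) :
    ∑ S ∈ c4IndepSets.filter (i ∈ ·), x ^ #S = x + x ^ 2 := by
  have hne : ({i} : Finset (Fin 4)) ≠ {i, i + 2} := by revert i; decide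
  have hcard : #({i, i + 2} : Finset (Fin 4)) = 2 := by revert i; decide
  rw [filter_mem_c4IndepSets, sum_pair hne, card_singleton, hcard, pow_one]

noncomputable def c4Fugacity (s : ℝ) : ℝ := (-1 + 4 * s + √(1 - 4 * s + 8 * s ^ 2)) / (2 - 4 * s)

variable {s : ℝ}

theorem c4Fugacity_pos (h0 : 0 < s) (h1 : s < 1 / 2) : 0 < c4Fugacity s := by
  have hr : 1 - 4 * s < √(1 - 4 * s + 8 * s ^ 2) := by
    rcases le_or_gt (1 - 4 * s) 0 with h | h
    · exact h.trans_lt (sqrt_pos.2 (by nlinarith))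
    · exact lt_sqrt_of_sq_lt (by nlinarith)
  exact div_pos (by linarith) (by linarith)

theorem c4Fugacity_add_sq (hs : s ≠ 1 / 2) :
    c4Fugacity s + c4Fugacity s ^ 2 = s * (1 + 4 * c4Fugacity s + 2 * c4Fugacity s ^ 2) := by
  have hden : 2 - 4 * s ≠ 0 := fun h => hs (by linarith)
  have hsq := sq_sqrt (show 0 ≤ 1 - 4 * s + 8 * s ^ 2 by nlinarith [sq_nonneg (1 - 4 * s)])
  unfold c4Fugacity
  set r := √(1 - 4 * s + 8 * s ^ 2)
  field_simp
  linear_combination (1 - 2 * s) * hsq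

end CycleFour

open Classical in
/-- Among all distributions over the independent sets of the 4-cycle whose four
vertex marginals all equal `s` (with `0 < s < 1/2`), the product-form distribution
`b(x) = λ^{∑x}/Z` with `λ = (−1+4s+√(1−4s+8s²))/(2−4s)` uniquely maximizes entropy. -/
theorem stmt_11 (s : ℝ) (h0 : 0 < s) (h1 : s < 1 / 2) :
    let lam := (-1 + 4 * s + Real.sqrt (1 - 4 * s + 8 * s ^ 2)) / (2 - 4 * s)
    let Z := 1 + 4 * lam + 2 * lam ^ 2
    let Indep := Finset.univ.filter
      (fun S : Finset (Fin 4) => ∀ i ∈ S, ∀ j ∈ S, ¬ (j = i + 1 ∨ i = j + 1))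
    let bstar : Finset (Fin 4) → ℝ := fun S => if S ∈ Indep then lam ^ S.card / Z else 0
    let P : (Finset (Fin 4) → ℝ) → Prop := fun b =>
      (∀ S, 0 ≤ b S) ∧ (∀ S, S ∉ Indep → b S = 0) ∧
      (∑ S : Finset (Fin 4), b S = 1) ∧
      (∀ i : Fin 4, ∑ S ∈ Indep.filter (fun S => i ∈ S), b S = s)
    let H : (Finset (Fin 4) → ℝ) → ℝ := fun b => -∑ S : Finset (Fin 4), b S * Real.log (b S)
    P bstar ∧ ∀ b, P b → b ≠ bstar → H b < H bstar := by
  intro lam Z Indep bstar P H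
  have hlam : 0 < lam := c4Fugacity_pos h0 h1
  have hZ : 0 < Z := by positivity
  have hP : P bstar := productForm_isDistribWithMarginals hlam.le hZ
    (sum_c4IndepSets_pow_card lam)
    fun i => (sum_filter_mem_c4IndepSets_pow_card i lam).trans (c4Fugacity_add_sq h1.ne)
  exact ⟨hP, fun b hb hne => neg_sum_mul_log_lt_productForm hlam hZ hP hb hne⟩
end

section
/- Let G be a path graph on 3 vertices 1—2—3 (a tree, hence chordal), with target service rates s₁, s₂, s₃ > 0 satisfying s₁+s₂ < 1, s₂+s₃ < 1, and assume s₁+s₂+s₃ < 1. Then the fugacities given by the clique-based formula exp(v_i) = s_i ∏_{r ∋ i} (1 − ∑_{j∈r} s_j)^{−c_r} with regions {1,2},{2,3} (c=1) and {2} (c=−1), i.e. exp(v₁)=s₁/(1−s₁−s₂), exp(v₃)=s₃/(1−s₂−s₃), exp(v₂)=s₂(1−s₂)/((1−s₁−s₂)(1−s₂−s₃)), yield a Gibbs distribution over independent sets of the path whose vertex marginals are exactly s₁, s₂, s₃. -/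
/-- Path graph 1—2—3 (chordal): the clique-based fugacities
`exp v₁ = s₁/(1−s₁−s₂)`, `exp v₂ = s₂(1−s₂)/((1−s₁−s₂)(1−s₂−s₃))`,
`exp v₃ = s₃/(1−s₂−s₃)` yield a Gibbs distribution over the independent sets
`∅, {1}, {2}, {3}, {1,3}` with vertex marginals exactly `s₁, s₂, s₃`. -/
theorem stmt_12 (s1 s2 s3 : ℝ) (h1 : 0 < s1) (h2 : 0 < s2) (h3 : 0 < s3)
    (h12 : s1 + s2 < 1) (h23 : s2 + s3 < 1) (h123 : s1 + s2 + s3 < 1)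
    (v1 v2 v3 : ℝ)
    (hv1 : Real.exp v1 = s1 / (1 - s1 - s2))
    (hv2 : Real.exp v2 = s2 * (1 - s2) / ((1 - s1 - s2) * (1 - s2 - s3)))
    (hv3 : Real.exp v3 = s3 / (1 - s2 - s3)) :
    let Z := 1 + Real.exp v1 + Real.exp v2 + Real.exp v3 + Real.exp (v1 + v3)
    (Real.exp v1 + Real.exp (v1 + v3)) / Z = s1 ∧
    Real.exp v2 / Z = s2 ∧
    (Real.exp v3 + Real.exp (v1 + v3)) / Z = s3 := by
  have hA : (0:ℝ) < 1 - s1 - s2 := by linarith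
  have hB : (0:ℝ) < 1 - s2 - s3 := by linarith
  have hS2 : (0:ℝ) < 1 - s2 := by linarith
  have hZ : 1 + Real.exp v1 + Real.exp v2 + Real.exp v3 + Real.exp (v1 + v3)
      = (1 - s2) / ((1 - s1 - s2) * (1 - s2 - s3)) := by
    rw [Real.exp_add, hv1, hv2, hv3]
    field_simp
    ring
  intro Z
  have hZdef : Z = (1 - s2) / ((1 - s1 - s2) * (1 - s2 - s3)) := hZ
  refine ⟨?_, ?_, ?_⟩ <;>
    simp only [hZdef, Real.exp_add, hv1, hv2, hv3] <;> field_simp <;> ring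
end
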